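/- arXiv:0903.3726 — 3 statements merged into one kernel-verified Lean document; each statement's English description precedes it below -/
import Mathlib

section
/- Let 1 ≤ i ≤ n−1. (i) If R_{i+1} − R_i ≥ 2e or R_{i+1} − R_i ∈ {−2e, 2−2e, 2e−2}, then α_i = (R_{i+1}−R_i)/2 + e. (ii) If R_{i+1} − R_i is odd, then α_i = min{ (R_{i+1}−R_i)/2 + e, R_{i+1}−R_i }. In each of these cases α_i depends only on the difference R_{i+1} − R_i. -/
/-!
Combinatorial setting abstracting a good BONG over a dyadic local field.
`R : ℕ → ℤ` are the orders `R_i = ord a_i` (indices `1,…,n` used),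
`d : ℕ → EReal` are the values `d_j = d(-a_j a_{j+1}) ∈ ℕ ∪ {∞}`
(the allowed values are encoded in condition (G3) below).
-/

/-- The term `(R_{i+1} - R_i)/2 + e` appearing in the definition of `α_i`. -/
noncomputable def halfTerm (e : ℤ) (R : ℕ → ℤ) (i : ℕ) : EReal :=
  (((R (i + 1) - R i : ℝ) / 2 + (e : ℝ) : ℝ) : EReal)

/-- The set whose minimum defines `α_i`. -/
noncomputable def alphaSet (e : ℤ) (n : ℕ) (R : ℕ → ℤ) (d : ℕ → EReal) (i : ℕ) :
    Set EReal :=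
  {halfTerm e R i}
    ∪ {x | ∃ j, 1 ≤ j ∧ j ≤ i ∧ x = ((R (i + 1) - R j : ℝ) : EReal) + d j}
    ∪ {x | ∃ j, i ≤ j ∧ j + 1 ≤ n ∧ x = ((R (j + 1) - R i : ℝ) : EReal) + d j}

/-- The invariant `α_i = α_i(L)`, for `1 ≤ i ≤ n - 1`. -/
noncomputable def alpha (e : ℤ) (n : ℕ) (R : ℕ → ℤ) (d : ℕ → EReal) (i : ℕ) : EReal :=
  sInf (alphaSet e n R d i)

/-- `α'_m(k,l)`: the `α`-invariant of the truncated data `R_k,…,R_l`, `d_k,…,d_{l-1}`. -/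
noncomputable def alphaT (e : ℤ) (R : ℕ → ℤ) (d : ℕ → EReal) (k l m : ℕ) : EReal :=
  alpha e (l - k + 1) (fun j => R (k + j - 1)) (fun j => d (k + j - 1)) m

/-- Conditions (G1)-(G4) on the data `(e, n, R, d)`, abstracting a good BONG. -/
structure GoodBONG (e : ℤ) (n : ℕ) (R : ℕ → ℤ) (d : ℕ → EReal) : Prop where
  he : 1 ≤ e
  hn : 2 ≤ n
  g1 : ∀ i, 1 ≤ i → i + 2 ≤ n → R i ≤ R (i + 2)
  g2a : ∀ j, 1 ≤ j → j + 1 ≤ n → 0 ≤ R (j + 1) - R j + 2 * e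
  g2b : ∀ j, 1 ≤ j → j + 1 ≤ n → 0 ≤ ((R (j + 1) - R j : ℝ) : EReal) + d j
  g3 : ∀ j, 1 ≤ j → j + 1 ≤ n →
    d j = 0 ∨ (∃ m : ℕ, Odd m ∧ (m : ℤ) ≤ 2 * e - 1 ∧ d j = ((m : ℝ) : EReal)) ∨
      d j = (((2 * e : ℤ) : ℝ) : EReal) ∨ d j = ⊤
  g4odd : ∀ j, 1 ≤ j → j + 1 ≤ n → Odd (R (j + 1) - R j) →
    0 < R (j + 1) - R j ∧ d j = 0
  g4even : ∀ j, 1 ≤ j → j + 1 ≤ n → Even (R (j + 1) - R j) → 0 < d j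


section StmtAux

variable {e : ℤ} {n : ℕ} {R : ℕ → ℤ} {d : ℕ → EReal}

private lemma chain2 (h : GoodBONG e n R d) :
    ∀ (t j : ℕ), 1 ≤ j → j + 2 * t ≤ n → R j ≤ R (j + 2 * t) := by
  intro t
  induction t with
  | zero => intro j _ _; simp
  | succ t ih =>
    intro j hj hn
    have h1 : R j ≤ R (j + 2) := h.g1 j hj (by omega)
    have h2 : R (j + 2) ≤ R (j + 2 + 2 * t) := ih (j + 2) (by omega) (by omega)
    have h3 : j + 2 * (t + 1) = j + 2 + 2 * t := by ring
    rw [h3]; linarith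

private lemma evenChain (h : GoodBONG e n R d) {j k : ℕ} (hj : 1 ≤ j) (hjk : j ≤ k)
    (hkn : k ≤ n) (hpar : k % 2 = j % 2) : R j ≤ R k := by
  obtain ⟨t, rfl⟩ : ∃ t, k = j + 2 * t := ⟨(k - j) / 2, by omega⟩
  exact chain2 h t j hj hkn

private lemma dzero_gap (h : GoodBONG e n R d) {j : ℕ} (hj : 1 ≤ j) (hjn : j + 1 ≤ n)
    (hd : d j = 0) : Odd (R (j + 1) - R j) ∧ 0 < R (j + 1) - R j := by
  rcases Int.even_or_odd (R (j + 1) - R j) with he | ho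
  · exfalso
    have := h.g4even j hj hjn he
    rw [hd] at this
    exact lt_irrefl 0 this
  · exact ⟨ho, (h.g4odd j hj hjn ho).1⟩

/-- If `d j = 0` then `R j < R (j+2)` (strict step at the bottom). -/
private lemma strict_step (h : GoodBONG e n R d) {j : ℕ} (hj : 1 ≤ j) (hjn : j + 2 ≤ n)
    (hd : d j = 0) : R j < R (j + 2) := by
  obtain ⟨ho, hpos⟩ := dzero_gap h hj (by omega) hd
  have hle := h.g1 j hj hjn
  rcases lt_or_eq_of_le hle with h' | h'
  · exact h'
  · exfalso
    have heq : R (j + 1 + 1) - R (j + 1) = -(R (j + 1) - R j) := by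
      have e2 : j + 1 + 1 = j + 2 := rfl
      rw [e2]; omega
    have hodd : Odd (R (j + 1 + 1) - R (j + 1)) := by rw [heq]; exact ho.neg
    have := (h.g4odd (j + 1) (by omega) (by omega) hodd).1
    omega

/-- If `d (j+1) = 0` then `R j < R (j+2)` (strict step at the top). -/
private lemma strict_step' (h : GoodBONG e n R d) {j : ℕ} (hj : 1 ≤ j) (hjn : j + 2 ≤ n)
    (hd : d (j + 1) = 0) : R j < R (j + 2) := by
  obtain ⟨ho, hpos⟩ := dzero_gap h (j := j + 1) (by omega) (by omega) hd
  have hle := h.g1 j hj hjn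
  rcases lt_or_eq_of_le hle with h' | h'
  · exact h'
  · exfalso
    have heq : R (j + 1) - R j = -(R (j + 1 + 1) - R (j + 1)) := by
      have e2 : j + 1 + 1 = j + 2 := rfl
      rw [e2]; omega
    have hodd : Odd (R (j + 1) - R j) := by rw [heq]; exact ho.neg
    have := (h.g4odd j hj (by omega) hodd).1
    omega

private lemma strict_chain_lo (h : GoodBONG e n R d) {j k : ℕ} (hj : 1 ≤ j) (hjk : j < k)
    (hkn : k ≤ n) (hpar : k % 2 = j % 2) (hd : d j = 0) : R j < R k := by
  have h2 : j + 2 ≤ k := by omega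
  have h1 : R j < R (j + 2) := strict_step h hj (by omega) hd
  have h3 : R (j + 2) ≤ R k := evenChain h (by omega) h2 hkn (by omega)
  linarith

private lemma strict_chain_hi (h : GoodBONG e n R d) {a k : ℕ} (ha : 1 ≤ a) (hak : a ≤ k)
    (hkn : k + 2 ≤ n) (hpar : k % 2 = a % 2) (hd : d (k + 1) = 0) : R a < R (k + 2) := by
  have h1 : R a ≤ R k := evenChain h ha hak (by omega) hpar
  have h2 : R k < R (k + 2) := strict_step' h (by omega) hkn hd
  linarith

/-- Integer facts about a finite value `d j = m`. -/
private lemma dfin (h : GoodBONG e n R d) {j : ℕ} {m : ℤ} (hj : 1 ≤ j) (hjn : j + 1 ≤ n)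
    (hdm : d j = ((m : ℝ) : EReal)) :
    0 ≤ m ∧ 0 ≤ R (j + 1) - R j + m ∧ (m = 0 → d j = 0) ∧
      (R (j + 1) - R j + m = 0 → m = 2 * e ∧ R (j + 1) - R j = -(2 * e)) := by
  have hgm : 0 ≤ R (j + 1) - R j + m := by
    have h0 := h.g2b j hj hjn
    rw [hdm, ← EReal.coe_add] at h0
    have : (0 : ℝ) ≤ (R (j + 1) : ℝ) - (R j : ℝ) + (m : ℝ) := by exact_mod_cast EReal.coe_nonneg.mp h0
    exact_mod_cast this
  have hd0 : m = 0 → d j = 0 := by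
    intro hm; rw [hdm, hm]; norm_num
  have key : 0 ≤ m ∧ (R (j + 1) - R j + m = 0 → m = 2 * e ∧ R (j + 1) - R j = -(2 * e)) := by
    rcases h.g3 j hj hjn with h0 | ⟨m', hm'odd, hm'le, hm'⟩ | h2e | htop
    · -- d j = 0, so m = 0
      have hm0 : m = 0 := by
        rw [hdm] at h0
        have : (m : ℝ) = 0 := by exact_mod_cast h0
        exact_mod_cast this
      refine ⟨by omega, ?_⟩
      intro heq
      exfalso
      have := (dzero_gap h hj hjn (hd0 hm0)).2
      omega
    · -- d j = m' odd
      have hmm' : m = (m' : ℤ) := by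
        rw [hdm] at hm'
        have : (m : ℝ) = (m' : ℝ) := EReal.coe_eq_coe_iff.mp hm'
        exact_mod_cast this
      have hodd : Odd (m : ℤ) := by rw [hmm']; exact_mod_cast hm'odd
      refine ⟨by omega, ?_⟩
      intro heq
      exfalso
      have hmpos : 1 ≤ m := by
        rcases hodd with ⟨r, hr⟩
        omega
      have hgodd : Odd (R (j + 1) - R j) := by
        have : R (j + 1) - R j = -m := by omega
        rw [this]; exact hodd.neg
      have := (h.g4odd j hj hjn hgodd).1
      omega
    · -- d j = 2e
      have hm2e : m = 2 * e := by
        rw [hdm] at h2e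
        have : (m : ℝ) = ((2 * e : ℤ) : ℝ) := EReal.coe_eq_coe_iff.mp h2e
        exact_mod_cast this
      have he := h.he
      exact ⟨by omega, fun heq => ⟨hm2e, by omega⟩⟩
    · exfalso
      rw [hdm] at htop
      exact EReal.coe_ne_top _ htop
  exact ⟨key.1, hgm, hd0, key.2⟩

private lemma dtop_or_int (h : GoodBONG e n R d) {j : ℕ} (hj : 1 ≤ j) (hjn : j + 1 ≤ n) :
    d j = ⊤ ∨ ∃ m : ℤ, d j = ((m : ℝ) : EReal) := by
  rcases h.g3 j hj hjn with h0 | ⟨m', _, _, hm'⟩ | h2e | htop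
  · right; exact ⟨0, by rw [h0]; norm_num⟩
  · right; exact ⟨(m' : ℤ), by rw [hm']; norm_num⟩
  · right; exact ⟨2 * e, h2e⟩
  · left; exact htop

/-- Main integer bound for second-type terms `R_{i+1} - R_j + d_j`, `1 ≤ j ≤ i`. -/
private lemma type2_int (h : GoodBONG e n R d) {i j : ℕ} {m : ℤ}
    (hj : 1 ≤ j) (hji : j ≤ i) (hin : i + 1 ≤ n) (hdm : d j = ((m : ℝ) : EReal)) :
    R (i + 1) - R i ≤ R (i + 1) - R j + m ∧
      ((2 * e ≤ R (i + 1) - R i ∨ R (i + 1) - R i = -(2 * e) ∨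
          R (i + 1) - R i = 2 - 2 * e ∨ R (i + 1) - R i = 2 * e - 2) →
        R (i + 1) - R i + 2 * e ≤ 2 * (R (i + 1) - R j + m)) := by
  obtain ⟨hm0, hgm, hd0, heq⟩ := dfin h hj (by omega) hdm
  have he := h.he
  by_cases hpar : i % 2 = j % 2
  · -- i - j even
    have c1 : R j ≤ R i := evenChain h hj hji (by omega) hpar
    have c2 : R (j + 1) ≤ R (i + 1) := evenChain h (by omega) (by omega) hin (by omega)
    have hfirst : R (i + 1) - R i ≤ R (i + 1) - R j + m := by omega
    refine ⟨hfirst, ?_⟩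
    rintro (hc | hc | hc | hc)
    · omega
    · omega
    · -- u = 2 - 2e : need 1 ≤ X
      by_cases hx : 1 ≤ R (i + 1) - R j + m
      · omega
      · exfalso
        have hX0 : R (i + 1) - R j + m = 0 := by omega
        have h1 : R (j + 1) - R j + m = 0 := by omega
        obtain ⟨hm2e, hg2e⟩ := heq h1
        omega
    · -- u = 2e - 2 : need u + 1 ≤ X
      by_cases hm1 : 1 ≤ m
      · omega
      · have hm00 : m = 0 := by omega
        obtain ⟨hgodd, hgpos⟩ := dzero_gap h hj (by omega) (hd0 hm00)
        by_cases hji' : j = i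
        · exfalso
          subst hji'
          have : Even (R (j + 1) - R j) := ⟨e - 1, by omega⟩
          exact (Int.not_odd_iff_even.mpr this) hgodd
        · have : R j < R i := strict_chain_lo h hj (by omega) (by omega) hpar (hd0 hm00)
          omega
  · -- i - j odd
    have hji' : j < i := by omega
    have c3 : R j ≤ R (i + 1) := evenChain h hj (by omega) hin (by omega)
    have c4 : R (j + 1) ≤ R i := evenChain h (by omega) (by omega) (by omega) (by omega)
    have hfirst : R (i + 1) - R i ≤ R (i + 1) - R j + m := by omega
    refine ⟨hfirst, ?_⟩
    rintro (hc | hc | hc | hc)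
    · omega
    · omega
    · by_cases hm1 : 1 ≤ m
      · omega
      · have hm00 : m = 0 := by omega
        have : R j < R (i + 1) := strict_chain_lo h hj (by omega) hin (by omega) (hd0 hm00)
        omega
    · by_cases hgm1 : 1 ≤ R (j + 1) - R j + m
      · omega
      · have h1 : R (j + 1) - R j + m = 0 := by omega
        obtain ⟨hm2e, hg2e⟩ := heq h1
        omega

/-- Main integer bound for third-type terms `R_{j+1} - R_i + d_j`, `i ≤ j ≤ n-1`. -/
private lemma type3_int (h : GoodBONG e n R d) {i j : ℕ} {m : ℤ}
    (hi : 1 ≤ i) (hij : i ≤ j) (hjn : j + 1 ≤ n) (hdm : d j = ((m : ℝ) : EReal)) :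
    R (i + 1) - R i ≤ R (j + 1) - R i + m ∧
      ((2 * e ≤ R (i + 1) - R i ∨ R (i + 1) - R i = -(2 * e) ∨
          R (i + 1) - R i = 2 - 2 * e ∨ R (i + 1) - R i = 2 * e - 2) →
        R (i + 1) - R i + 2 * e ≤ 2 * (R (j + 1) - R i + m)) := by
  obtain ⟨hm0, hgm, hd0, heq⟩ := dfin h (by omega) hjn hdm
  have he := h.he
  by_cases hpar : j % 2 = i % 2
  · -- j - i even
    have c1 : R i ≤ R j := evenChain h hi hij (by omega) hpar
    have c2 : R (i + 1) ≤ R (j + 1) := evenChain h (by omega) (by omega) hjn (by omega)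
    have hfirst : R (i + 1) - R i ≤ R (j + 1) - R i + m := by omega
    refine ⟨hfirst, ?_⟩
    rintro (hc | hc | hc | hc)
    · omega
    · omega
    · by_cases hx : 1 ≤ R (j + 1) - R i + m
      · omega
      · exfalso
        have h1 : R (j + 1) - R j + m = 0 := by omega
        obtain ⟨hm2e, hg2e⟩ := heq h1
        omega
    · by_cases hm1 : 1 ≤ m
      · omega
      · have hm00 : m = 0 := by omega
        obtain ⟨hgodd, hgpos⟩ := dzero_gap h (by omega) hjn (hd0 hm00)
        by_cases hij' : j = i
        · exfalso
          subst hij'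
          have : Even (R (j + 1) - R j) := ⟨e - 1, by omega⟩
          exact (Int.not_odd_iff_even.mpr this) hgodd
        · obtain ⟨k, rfl⟩ : ∃ k, j = k + 1 := ⟨j - 1, by omega⟩
          have hstr : R (i + 1) < R (k + 2) :=
            strict_chain_hi h (by omega) (by omega) (by omega) (by omega) (hd0 hm00)
          have e2 : k + 1 + 1 = k + 2 := rfl
          rw [e2]
          omega
  · -- j - i odd
    have hij' : i < j := by omega
    have c3 : R i ≤ R (j + 1) := evenChain h hi (by omega) hjn (by omega)
    have c4 : R (i + 1) ≤ R j := evenChain h (by omega) (by omega) (by omega) (by omega)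
    have hfirst : R (i + 1) - R i ≤ R (j + 1) - R i + m := by omega
    refine ⟨hfirst, ?_⟩
    rintro (hc | hc | hc | hc)
    · omega
    · omega
    · by_cases hm1 : 1 ≤ m
      · omega
      · have hm00 : m = 0 := by omega
        obtain ⟨k, rfl⟩ : ∃ k, j = k + 1 := ⟨j - 1, by omega⟩
        have hstr : R i < R (k + 2) :=
          strict_chain_hi h hi (by omega) (by omega) (by omega) (hd0 hm00)
        have e2 : k + 1 + 1 = k + 2 := rfl
        rw [e2]
        omega
    · by_cases hgm1 : 1 ≤ R (j + 1) - R j + m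
      · omega
      · have h1 : R (j + 1) - R j + m = 0 := by omega
        obtain ⟨hm2e, hg2e⟩ := heq h1
        omega

end StmtAux

/-- (i) if `R_{i+1} - R_i ≥ 2e` or `R_{i+1} - R_i ∈ {-2e, 2-2e, 2e-2}`,
then `α_i = (R_{i+1}-R_i)/2 + e`; (ii) if `R_{i+1} - R_i` is odd, then
`α_i = min{(R_{i+1}-R_i)/2 + e, R_{i+1}-R_i}`. In each case `α_i` depends only on the
difference `R_{i+1} - R_i`. -/
theorem stmt16 (e : ℤ) (n : ℕ) (R : ℕ → ℤ) (d : ℕ → EReal)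
    (h : GoodBONG e n R d) (i : ℕ) (hi : 1 ≤ i) (hin : i + 1 ≤ n) :
    (2 * e ≤ R (i + 1) - R i ∨ R (i + 1) - R i = -(2 * e) ∨
        R (i + 1) - R i = 2 - 2 * e ∨ R (i + 1) - R i = 2 * e - 2 →
      alpha e n R d i = halfTerm e R i) ∧
    (Odd (R (i + 1) - R i) →
      alpha e n R d i = min (halfTerm e R i) ((R (i + 1) - R i : ℝ) : EReal)) := by
  have hmem_h : halfTerm e R i ∈ alphaSet e n R d i := Or.inl (Or.inl rfl)
  constructor
  · -- case (i)
    intro Hcase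
    apply le_antisymm
    · exact sInf_le hmem_h
    · apply le_sInf
      rintro x ((hx | ⟨j, hj1, hji, rfl⟩) | ⟨j, hij, hjn, rfl⟩)
      · rw [Set.mem_singleton_iff] at hx
        rw [hx]
      · rcases dtop_or_int h hj1 (by omega) with htop | ⟨m, hdm⟩
        · rw [htop, EReal.coe_add_top]; exact le_top
        · rw [hdm, ← EReal.coe_add]
          show halfTerm e R i ≤ _
          rw [halfTerm, EReal.coe_le_coe_iff]
          have hZ := (type2_int h hj1 hji hin hdm).2 Hcase
          have hZ' : ((R (i + 1) : ℝ)) - R i + 2 * e ≤ 2 * ((R (i + 1) : ℝ) - R j + m) := by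
            exact_mod_cast hZ
          linarith
      · rcases dtop_or_int h (by omega) hjn with htop | ⟨m, hdm⟩
        · rw [htop, EReal.coe_add_top]; exact le_top
        · rw [hdm, ← EReal.coe_add]
          show halfTerm e R i ≤ _
          rw [halfTerm, EReal.coe_le_coe_iff]
          have hZ := (type3_int h hi hij hjn hdm).2 Hcase
          have hZ' : ((R (i + 1) : ℝ)) - R i + 2 * e ≤ 2 * ((R (j + 1) : ℝ) - R i + m) := by
            exact_mod_cast hZ
          linarith
  · -- case (ii)
    intro hodd
    obtain ⟨hupos, hdi0⟩ := h.g4odd i hi hin hodd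
    have hmem_u : ((R (i + 1) - R i : ℝ) : EReal) ∈ alphaSet e n R d i := by
      refine Or.inl (Or.inr ⟨i, hi, le_refl i, ?_⟩)
      rw [hdi0, add_zero]
    apply le_antisymm
    · exact le_min (sInf_le hmem_h) (sInf_le hmem_u)
    · apply le_sInf
      rintro x ((hx | ⟨j, hj1, hji, rfl⟩) | ⟨j, hij, hjn, rfl⟩)
      · rw [Set.mem_singleton_iff] at hx
        rw [hx]
        exact min_le_left _ _
      · refine le_trans (min_le_right _ _) ?_
        rcases dtop_or_int h hj1 (by omega) with htop | ⟨m, hdm⟩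
        · rw [htop, EReal.coe_add_top]; exact le_top
        · rw [hdm, ← EReal.coe_add, EReal.coe_le_coe_iff]
          have hZ := (type2_int h hj1 hji hin hdm).1
          have hZ' : ((R (i + 1) : ℝ)) - R i ≤ (R (i + 1) : ℝ) - R j + m := by
            exact_mod_cast hZ
          linarith
      · refine le_trans (min_le_right _ _) ?_
        rcases dtop_or_int h (by omega) hjn with htop | ⟨m, hdm⟩
        · rw [htop, EReal.coe_add_top]; exact le_top
        · rw [hdm, ← EReal.coe_add, EReal.coe_le_coe_iff]
          have hZ := (type3_int h hi hij hjn hdm).1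
          have hZ' : ((R (i + 1) : ℝ)) - R i ≤ (R (j + 1) : ℝ) - R i + m := by
            exact_mod_cast hZ
          linarith
end

section
/- If 1 < i < n and R_{i−1} = R_{i+1}, then α_{i−1} + α_i ≤ 2e. -/
/-- if `1 < i < n` and `R_{i-1} = R_{i+1}` then `α_{i-1} + α_i ≤ 2e`. -/
theorem stmt17 (e : ℤ) (n : ℕ) (R : ℕ → ℤ) (d : ℕ → EReal)
    (h : GoodBONG e n R d) (i : ℕ) (h1 : 1 < i) (h2 : i + 1 ≤ n)
    (hR : R (i - 1) = R (i + 1)) :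
    alpha e n R d (i - 1) + alpha e n R d i ≤ (((2 * e : ℤ) : ℝ) : EReal) := by
  have hi1 : i - 1 + 1 = i := by omega
  have ha : alpha e n R d (i-1) ≤ halfTerm e R (i-1) :=
    sInf_le (Or.inl (Or.inl rfl))
  have hb : alpha e n R d i ≤ halfTerm e R i :=
    sInf_le (Or.inl (Or.inl rfl))
  have hsum : halfTerm e R (i-1) + halfTerm e R i = (((2 * e : ℤ) : ℝ) : EReal) := by
    unfold halfTerm
    rw [hi1, ← EReal.coe_add, EReal.coe_eq_coe_iff]
    have : (R (i-1) : ℝ) = (R (i+1) : ℝ) := by exact_mod_cast hR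
    push_cast
    linarith
  calc alpha e n R d (i-1) + alpha e n R d i ≤ halfTerm e R (i-1) + halfTerm e R i :=
        add_le_add ha hb
    _ = _ := hsum
end

section
/- Assume e = 1 (the 2-adic case). Then for every 1 ≤ i ≤ n−1: α_i = 1 if R_{i+1} − R_i = 1, and α_i = (R_{i+1} − R_i)/2 + 1 otherwise. -/
/-!
Every term of the minimum defining `α_i`, other than `(R_{i+1} - R_i)/2 + e`, is an integer (or `∞`)
that is at least `max (R_{i+1} - R_i) 0`, and at least `1` when `R_{i+1} ≥ R_i`: by (G1) the jump
`R_{j+1} - R_j` can be compared with `R_{i+1} - R_i` according to the parity of `j - i`, and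
(G2)–(G4) make `R_{j+1} - R_j + d_j` nonnegative and `d_j` a natural number that is positive unless
the jump is odd, hence positive. For `e = 1`, (G2) and (G4) leave `R_{i+1} - R_i ∈ {-2, 0, 1, 2, …}`;
then these bounds dominate `(R_{i+1} - R_i)/2 + 1` except when `R_{i+1} - R_i = 1`, where the term
`R_{i+1} - R_i + d_i = 1` is the minimum.
-/

namespace GoodBONG

variable {e : ℤ} {n : ℕ} {R : ℕ → ℤ} {d : ℕ → EReal}

theorem R_le_of_mod_two_eq (h : GoodBONG e n R d) {a b : ℕ} (ha : 1 ≤ a) (hab : a ≤ b)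
    (hb : b ≤ n) (hmod : a % 2 = b % 2) : R a ≤ R b := by
  obtain ⟨k, rfl⟩ : ∃ k, b = a + 2 * k := ⟨(b - a) / 2, by omega⟩
  clear hab hmod
  induction k with
  | zero => rfl
  | succ k ih => exact (ih (by omega)).trans (h.g1 (a + 2 * k) (by omega) (by omega))

theorem R_pair_le (h : GoodBONG e n R d) {p q : ℕ} (hp : 1 ≤ p) (hpq : p ≤ q) (hq : q + 1 ≤ n) :
    (R p ≤ R q ∧ R (p + 1) ≤ R (q + 1)) ∨ (R p ≤ R (q + 1) ∧ R (p + 1) ≤ R q) := by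
  rcases Nat.even_or_odd (q - p) with hpar | hpar
  · rw [Nat.even_iff] at hpar
    exact .inl ⟨h.R_le_of_mod_two_eq hp hpq (by omega) (by omega),
      h.R_le_of_mod_two_eq (by omega) (by omega) hq (by omega)⟩
  · rw [Nat.odd_iff] at hpar
    exact .inr ⟨h.R_le_of_mod_two_eq hp (by omega) hq (by omega),
      h.R_le_of_mod_two_eq (by omega) (by omega) (by omega) (by omega)⟩

theorem d_eq_top_or_exists_int (h : GoodBONG e n R d) {j : ℕ} (hj : 1 ≤ j) (hjn : j + 1 ≤ n) :
    d j = ⊤ ∨ ∃ c : ℤ, d j = ((c : ℝ) : EReal) ∧ 0 ≤ c ∧ 0 ≤ R (j + 1) - R j + c ∧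
      (c = 0 → 1 ≤ R (j + 1) - R j) := by
  have hval : d j = ⊤ ∨ ∃ c : ℤ, d j = ((c : ℝ) : EReal) ∧ 0 ≤ c := by
    rcases h.g3 j hj hjn with hd | ⟨m, -, -, hd⟩ | hd | hd
    · exact .inr ⟨0, by simp [hd], le_rfl⟩
    · exact .inr ⟨m, by simp [hd], by positivity⟩
    · exact .inr ⟨2 * e, hd, by linarith [h.he]⟩
    · exact .inl hd
  refine hval.imp_right fun ⟨c, hd, hc⟩ => ⟨c, hd, hc, ?_, fun hc0 => ?_⟩
  · have hsum := h.g2b j hj hjn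
    rw [hd, ← EReal.coe_add, EReal.coe_nonneg] at hsum
    exact_mod_cast hsum
  · have hnot_even : ¬ Even (R (j + 1) - R j) := fun hev => by
      simpa [hd, hc0] using h.g4even j hj hjn hev
    exact (h.g4odd j hj hjn (Int.not_even_iff_odd.mp hnot_even)).1

theorem add_d_eq_top_or_exists_int (h : GoodBONG e n R d) {j : ℕ} (hj : 1 ≤ j)
    (hjn : j + 1 ≤ n) {r y : ℤ}
    (hy : (r ≤ y ∧ R (j + 1) - R j ≤ y) ∨ (0 ≤ y ∧ r + (R (j + 1) - R j) ≤ y)) :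
    ((y : ℝ) : EReal) + d j = ⊤ ∨ ∃ z : ℤ, ((y : ℝ) : EReal) + d j = ((z : ℝ) : EReal) ∧
      0 ≤ z ∧ r ≤ z ∧ (0 ≤ r → 1 ≤ z) := by
  rcases h.d_eq_top_or_exists_int hj hjn with hd | ⟨c, hd, hc, hsum, hc0⟩
  · exact .inl (by rw [hd, EReal.coe_add_top])
  · refine .inr ⟨y + c, by rw [hd, ← EReal.coe_add]; push_cast; rfl, ?_⟩
    omega

theorem eq_halfTerm_or_top_or_exists_int_of_mem_alphaSet (h : GoodBONG e n R d) {i : ℕ}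
    (hi : 1 ≤ i) (hin : i + 1 ≤ n) {x : EReal} (hx : x ∈ alphaSet e n R d i) :
    x = halfTerm e R i ∨ x = ⊤ ∨ ∃ z : ℤ, x = ((z : ℝ) : EReal) ∧ 0 ≤ z ∧
      R (i + 1) - R i ≤ z ∧ (0 ≤ R (i + 1) - R i → 1 ≤ z) := by
  rcases hx with (hx | ⟨j, hj, hji, rfl⟩) | ⟨j, hij, hjn, rfl⟩
  · exact .inl hx
  · have hcast : ((R (i + 1) : ℝ) - R j) = ((R (i + 1) - R j : ℤ) : ℝ) := by push_cast; rfl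
    rw [hcast]
    refine .inr (h.add_d_eq_top_or_exists_int hj (by omega) ?_)
    rcases h.R_pair_le hj hji hin with hle | hle <;> omega
  · have hcast : ((R (j + 1) : ℝ) - R i) = ((R (j + 1) - R i : ℤ) : ℝ) := by push_cast; rfl
    rw [hcast]
    refine .inr (h.add_d_eq_top_or_exists_int (by omega) hjn ?_)
    rcases h.R_pair_le hi hij hjn with hle | hle <;> omega

theorem sub_eq_neg_two_or_nonneg (h : GoodBONG 1 n R d) {i : ℕ} (hi : 1 ≤ i) (hin : i + 1 ≤ n) :
    R (i + 1) - R i = -2 ∨ 0 ≤ R (i + 1) - R i := by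
  have hlow := h.g2a i hi hin
  by_contra! hne
  have hodd : Odd (R (i + 1) - R i) := ⟨-1, by omega⟩
  have := (h.g4odd i hi hin hodd).1
  omega

end GoodBONG

noncomputable def twoAdicAlpha (r : ℤ) : ℝ := if r = 1 then 1 else r / 2 + 1

theorem twoAdicAlpha_le_half_add_one (r : ℤ) : twoAdicAlpha r ≤ r / 2 + 1 := by
  unfold twoAdicAlpha
  split_ifs with hr
  · norm_num [hr]
  · rfl

theorem twoAdicAlpha_le_of_bounds {r z : ℤ} (hr : r = -2 ∨ 0 ≤ r) (hz : 0 ≤ z) (hrz : r ≤ z)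
    (hz1 : 0 ≤ r → 1 ≤ z) : twoAdicAlpha r ≤ z := by
  unfold twoAdicAlpha
  split_ifs with hr1
  · exact_mod_cast hz1 (by omega)
  · have hint : r + 2 ≤ 2 * z := by omega
    have hreal : (r : ℝ) + 2 ≤ 2 * z := by exact_mod_cast hint
    linarith

theorem GoodBONG.alpha_eq_twoAdicAlpha {n : ℕ} {R : ℕ → ℤ} {d : ℕ → EReal}
    (h : GoodBONG 1 n R d) {i : ℕ} (hi : 1 ≤ i) (hin : i + 1 ≤ n) :
    alpha 1 n R d i = twoAdicAlpha (R (i + 1) - R i) := by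
  have hhalf : halfTerm 1 R i = (((R (i + 1) - R i : ℤ) : ℝ) / 2 + 1 : ℝ) := by
    simp [halfTerm]
  apply le_antisymm
  · by_cases hr : R (i + 1) - R i = 1
    · have hd : d i = 0 := (h.g4odd i hi hin (by rw [hr]; exact odd_one)).2
      have hmem : ((1 : ℝ) : EReal) ∈ alphaSet 1 n R d i := by
        refine .inr ⟨i, le_rfl, hin, ?_⟩
        have hr' : (R (i + 1) : ℝ) - R i = 1 := by exact_mod_cast hr
        simp [hr', hd]
      exact (sInf_le hmem).trans_eq (by simp [twoAdicAlpha, hr])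
    · have hmem : halfTerm 1 R i ∈ alphaSet 1 n R d i := .inl (.inl rfl)
      exact (sInf_le hmem).trans_eq (by simp [twoAdicAlpha, hr, hhalf])
  · refine le_sInf fun x hx => ?_
    rcases h.eq_halfTerm_or_top_or_exists_int_of_mem_alphaSet hi hin hx
      with rfl | rfl | ⟨z, rfl, hz, hrz, hz1⟩
    · rw [hhalf, EReal.coe_le_coe_iff]
      exact twoAdicAlpha_le_half_add_one _
    · exact le_top
    · exact EReal.coe_le_coe_iff.2
        (twoAdicAlpha_le_of_bounds (h.sub_eq_neg_two_or_nonneg hi hin) hz hrz hz1)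

/-- in the 2-adic case `e = 1`, one has `α_i = 1` if `R_{i+1} - R_i = 1`,
and `α_i = (R_{i+1} - R_i)/2 + 1` otherwise. -/
theorem stmt18 (e : ℤ) (n : ℕ) (R : ℕ → ℤ) (d : ℕ → EReal)
    (h : GoodBONG e n R d) (he1 : e = 1) (i : ℕ) (hi : 1 ≤ i) (hin : i + 1 ≤ n) :
    (R (i + 1) - R i = 1 → alpha e n R d i = 1) ∧
    (R (i + 1) - R i ≠ 1 →
      alpha e n R d i = (((R (i + 1) - R i : ℝ) / 2 + 1 : ℝ) : EReal)) := by
  subst he1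
  rw [h.alpha_eq_twoAdicAlpha hi hin]
  constructor <;> intro hr <;> simp [twoAdicAlpha, hr]
end
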